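/- arXiv:1309.5413 — 4 statements merged into one kernel-verified Lean document; each statement's English description precedes it below -/
import Mathlib

section
/- Let X ~ Gamma(k, k-1) with k ≥ 2 an integer, and let g(γ) = γ/exp(γ-1). Then for all γ ≥ 1, P(X ≥ γ E[X]) ≤ g(γ)^k, and for all 0 < γ ≤ 1, P(X ≤ γ E[X]) ≤ g(γ)^k. -/
/-! Exponential tilting maps `Gamma(a, r)` to `Gamma(a, r - θ)`, so its moment generating
function is `(r / (r - θ)) ^ a` for `θ < r`. The Chernoff bound at the tilt
`θ = r (1 - γ⁻¹)`, which moves the mean `a / r` to `γ a / r`, equals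
`exp (-a (γ - 1)) γ ^ a = (γ / exp (γ - 1)) ^ a`; it bounds the upper or the lower tail
according to the sign of `θ`. -/

open MeasureTheory ProbabilityTheory Real

section GammaTilt

variable {a r θ : ℝ}

@[fun_prop]
lemma measurable_gammaPDF (a r : ℝ) : Measurable (gammaPDF a r) :=
  (measurable_gammaPDFReal a r).ennreal_ofReal

lemma exp_mul_gammaPDFReal (hr : 0 ≤ r) (hθ : θ < r) (x : ℝ) :
    exp (θ * x) * gammaPDFReal a r x = (r / (r - θ)) ^ a * gammaPDFReal a (r - θ) x := by
  have hrθ : 0 < r - θ := sub_pos.mpr hθ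
  unfold gammaPDFReal
  split_ifs
  · have hpow : r ^ a = (r / (r - θ)) ^ a * (r - θ) ^ a := by
      rw [div_rpow hr hrθ.le, div_mul_cancel₀ _ (rpow_pos_of_pos hrθ a).ne']
    have hexp : exp (θ * x) * exp (-(r * x)) = exp (-((r - θ) * x)) := by
      rw [← exp_add]; ring_nf
    rw [hpow]
    linear_combination (r / (r - θ)) ^ a * (r - θ) ^ a / Gamma a * x ^ (a - 1) * hexp
  · simp

lemma lintegral_exp_mul_gammaMeasure (ha : 0 < a) (hr : 0 ≤ r) (hθ : θ < r) :
    ∫⁻ x, ENNReal.ofReal (exp (θ * x)) ∂gammaMeasure a r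
      = ENNReal.ofReal ((r / (r - θ)) ^ a) := by
  have hrθ : 0 < r - θ := sub_pos.mpr hθ
  calc ∫⁻ x, ENNReal.ofReal (exp (θ * x)) ∂gammaMeasure a r
      = ∫⁻ x, ENNReal.ofReal ((r / (r - θ)) ^ a) * gammaPDF a (r - θ) x := by
        rw [gammaMeasure, lintegral_withDensity_eq_lintegral_mul₀ (by fun_prop) (by fun_prop)]
        refine lintegral_congr fun x ↦ ?_
        rw [Pi.mul_apply, gammaPDF, gammaPDF, mul_comm, ← ENNReal.ofReal_mul (exp_pos _).le,
          exp_mul_gammaPDFReal hr hθ, ENNReal.ofReal_mul (by positivity)]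
    _ = ENNReal.ofReal ((r / (r - θ)) ^ a) := by
        rw [lintegral_const_mul _ (by fun_prop), lintegral_gammaPDF_eq_one ha hrθ, mul_one]

lemma integrable_exp_mul_gammaMeasure (ha : 0 < a) (hr : 0 ≤ r) (hθ : θ < r) :
    Integrable (fun x ↦ exp (θ * x)) (gammaMeasure a r) := by
  refine ⟨by fun_prop, ?_⟩
  simp_rw [hasFiniteIntegral_iff_ofReal (ae_of_all _ fun x ↦ (exp_pos (θ * x)).le),
    lintegral_exp_mul_gammaMeasure ha hr hθ]
  exact ENNReal.ofReal_lt_top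

lemma mgf_id_gammaMeasure (ha : 0 < a) (hr : 0 ≤ r) (hθ : θ < r) :
    mgf id (gammaMeasure a r) θ = (r / (r - θ)) ^ a := by
  rw [mgf, integral_eq_lintegral_of_nonneg_ae (ae_of_all _ fun x ↦ (exp_pos _).le)
    (by fun_prop)]
  simp only [id, lintegral_exp_mul_gammaMeasure ha hr hθ]
  exact ENNReal.toReal_ofReal (by positivity)

-- `θ = r (1 - γ⁻¹)` minimises the Chernoff bound; it tilts the rate `r` to `r / γ`.
lemma exp_mul_mgf_id_gammaMeasure_optimal (ha : 0 < a) (hr : 0 < r) {γ : ℝ} (hγ : 0 < γ) :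
    exp (-(r * (1 - γ⁻¹)) * (γ * (a / r))) * mgf id (gammaMeasure a r) (r * (1 - γ⁻¹))
      = (γ / exp (γ - 1)) ^ a := by
  have hθ : r * (1 - γ⁻¹) < r :=
    mul_lt_of_lt_one_right hr (sub_lt_self 1 (inv_pos.mpr hγ))
  have hrate : r / (r - r * (1 - γ⁻¹)) = γ := by field_simp; ring
  have hexponent : -(r * (1 - γ⁻¹)) * (γ * (a / r)) = -((γ - 1) * a) := by field_simp
  rw [mgf_id_gammaMeasure ha hr.le hθ, hrate, hexponent, div_rpow hγ.le (exp_pos _).le,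
    ← exp_mul, exp_neg, inv_mul_eq_div]

theorem gammaMeasure_upper_tail_le (ha : 0 < a) (hr : 0 < r) {γ : ℝ} (hγ : 1 ≤ γ) :
    gammaMeasure a r {x | γ * (a / r) ≤ x} ≤ ENNReal.ofReal ((γ / exp (γ - 1)) ^ a) := by
  have := isProbabilityMeasure_gammaMeasure ha hr
  have hγ0 : 0 < γ := one_pos.trans_le hγ
  have hθ : 0 ≤ r * (1 - γ⁻¹) :=
    mul_nonneg hr.le (sub_nonneg.mpr (inv_le_one_of_one_le₀ hγ))
  rw [← ofReal_measureReal, ← exp_mul_mgf_id_gammaMeasure_optimal ha hr hγ0]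
  exact ENNReal.ofReal_le_ofReal <| measure_ge_le_exp_mul_mgf (X := id) _ hθ
    (integrable_exp_mul_gammaMeasure ha hr.le
      (mul_lt_of_lt_one_right hr (sub_lt_self 1 (inv_pos.mpr hγ0))))

theorem gammaMeasure_lower_tail_le (ha : 0 < a) (hr : 0 < r) {γ : ℝ} (hγ0 : 0 < γ)
    (hγ : γ ≤ 1) :
    gammaMeasure a r {x | x ≤ γ * (a / r)} ≤ ENNReal.ofReal ((γ / exp (γ - 1)) ^ a) := by
  have := isProbabilityMeasure_gammaMeasure ha hr
  have hθ : r * (1 - γ⁻¹) ≤ 0 :=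
    mul_nonpos_of_nonneg_of_nonpos hr.le (sub_nonpos.mpr ((one_le_inv₀ hγ0).mpr hγ))
  rw [← ofReal_measureReal, ← exp_mul_mgf_id_gammaMeasure_optimal ha hr hγ0]
  exact ENNReal.ofReal_le_ofReal <| measure_le_le_exp_mul_mgf (X := id) _ hθ
    (integrable_exp_mul_gammaMeasure ha hr.le (by linarith))

end GammaTilt

/-- Chernoff tail bounds for `X ~ Gamma(k, k-1)` with mean `E[X] = k/(k-1)`:
with `g(γ) = γ / exp(γ - 1)`, `P(X ≥ γ E[X]) ≤ g(γ)^k` for `γ ≥ 1`, and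
`P(X ≤ γ E[X]) ≤ g(γ)^k` for `0 < γ ≤ 1`. -/
theorem gamma_chernoff (k : ℕ) (hk : 2 ≤ k) (γ : ℝ) :
    (1 ≤ γ →
      gammaMeasure k ((k : ℝ) - 1) {x | γ * ((k : ℝ) / ((k : ℝ) - 1)) ≤ x}
        ≤ ENNReal.ofReal ((γ / Real.exp (γ - 1)) ^ k)) ∧
    (0 < γ → γ ≤ 1 →
      gammaMeasure k ((k : ℝ) - 1) {x | x ≤ γ * ((k : ℝ) / ((k : ℝ) - 1))}
        ≤ ENNReal.ofReal ((γ / Real.exp (γ - 1)) ^ k)) := by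
  have hk2 : (2 : ℝ) ≤ k := by exact_mod_cast hk
  have hshape : (0 : ℝ) < k := by linarith
  have hrate : (0 : ℝ) < k - 1 := by linarith
  refine ⟨fun hγ ↦ ?_, fun hγ0 hγ ↦ ?_⟩
  · simpa only [rpow_natCast] using gammaMeasure_upper_tail_le hshape hrate hγ
  · simpa only [rpow_natCast] using gammaMeasure_lower_tail_le hshape hrate hγ0 hγ
end

section
/- Let ε ∈ (0, 3/14), δ ∈ (0,1), and let k ≥ 2 ε^(-2) (1 - (14/3)ε)^(-1) ln(2/δ) be an integer. If X ~ Gamma(k, k-1), then P(|1/X - 1| > ε) < δ. -/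
/-!
Exponential tilting: the density of `Gamma(c, r)` is `(r/s)^c e^{(s-r)x}` times that of
`Gamma(c, s)`, so a set on which `(s - r) x ≤ t` has `Gamma(c, r)`-mass at most `(r/s)^c e^t`.
For `X ~ Gamma(K, K-1)` the event `|1/X - 1| > ε` lies in the two tails `X < (1+ε)⁻¹` and
`X > (1-ε)⁻¹`; tilting to rate `K(1 ∓ ε)`, and using `K log(1 - 1/K) ≤ -1` and the second-order
Taylor bound for `log (1 ∓ ε)`, makes the log of either bound `-Kε²/2 + O(Kε³ + ε)`, which the
hypothesis on `k` pushes below `log (δ/2)`.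
-/

open MeasureTheory ProbabilityTheory Real

theorem gammaPDFReal_eq_rpow_mul_exp_mul_gammaPDFReal {c r s : ℝ} (hr : 0 ≤ r) (hs : 0 < s)
    (x : ℝ) :
    gammaPDFReal c r x = (r / s) ^ c * exp ((s - r) * x) * gammaPDFReal c s x := by
  unfold gammaPDFReal
  split_ifs
  · have hexp : exp (-(r * x)) = exp ((s - r) * x) * exp (-(s * x)) := by
      rw [← exp_add]; ring_nf
    rw [div_rpow hr hs.le, hexp]
    field_simp
  · simp

theorem gammaMeasure_le_ofReal_mul_gammaMeasure {c r s C : ℝ} {S : Set ℝ} (hS : MeasurableSet S)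
    (hC : 0 ≤ C) (h : ∀ x ∈ S, gammaPDFReal c r x ≤ C * gammaPDFReal c s x) :
    gammaMeasure c r S ≤ ENNReal.ofReal C * gammaMeasure c s S := by
  simp only [gammaMeasure, withDensity_apply _ hS, gammaPDF]
  rw [← lintegral_const_mul _ (measurable_gammaPDFReal c s).ennreal_ofReal]
  refine setLIntegral_mono (by fun_prop) fun x hx => ?_
  rw [← ENNReal.ofReal_mul hC]
  exact ENNReal.ofReal_le_ofReal (h x hx)

theorem gammaMeasure_le_rpow_mul_exp {c r s t : ℝ} {S : Set ℝ} (hc : 0 < c) (hr : 0 ≤ r)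
    (hs : 0 < s) (hS : MeasurableSet S) (ht : ∀ x ∈ S, (s - r) * x ≤ t) :
    gammaMeasure c r S ≤ ENNReal.ofReal ((r / s) ^ c * exp t) := by
  have := isProbabilityMeasure_gammaMeasure hc hs
  calc gammaMeasure c r S
      ≤ ENNReal.ofReal ((r / s) ^ c * exp t) * gammaMeasure c s S := by
        refine gammaMeasure_le_ofReal_mul_gammaMeasure hS (by positivity) fun x hx => ?_
        rw [gammaPDFReal_eq_rpow_mul_exp_mul_gammaPDFReal hr hs]
        gcongr
        · exact gammaPDFReal_nonneg hc hs x
        · exact ht x hx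
    _ ≤ ENNReal.ofReal ((r / s) ^ c * exp t) := mul_le_of_le_one_right' prob_le_one

theorem neg_div_one_sub_sub_log_one_sub_le {u : ℝ} (hu : |u| < 1) :
    -u / (1 - u) - log (1 - u) ≤ -u ^ 2 / 2 + |u| ^ 3 / (1 - |u|) - u ^ 3 / (1 - u) := by
  have htaylor : |u + u ^ 2 / 2 + log (1 - u)| ≤ |u| ^ 3 / (1 - |u|) := by
    have := abs_log_sub_add_sum_range_le hu 2
    norm_num [Finset.sum_range_succ] at this
    exact this
  have hgeom : -u / (1 - u) = -u - u ^ 2 - u ^ 3 / (1 - u) := by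
    have : 1 - u ≠ 0 := by linarith [le_abs_self u]
    field_simp
    ring
  linarith [(abs_le.mp htaylor).1]

/-- The log of the tilted bound for `Gamma(K, K-1)` beyond `(1-u)⁻¹` at rate `K(1-u)`, after
`K log(1 - 1/K) ≤ -1`. -/
noncomputable def gammaTailExponent (K u : ℝ) : ℝ :=
  K * (-u / (1 - u) - log (1 - u)) + u / (1 - u)

theorem rpow_mul_exp_le_exp_gammaTailExponent {K u : ℝ} (hK : 1 < K) (hu : u < 1) :
    ((K - 1) / (K * (1 - u))) ^ K * exp ((K * (1 - u) - (K - 1)) * (1 - u)⁻¹) ≤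
      exp (gammaTailExponent K u) := by
  have hK0 : 0 < K := by linarith
  have hu0 : 0 < 1 - u := by linarith
  have hlog : K * log ((K - 1) / K) ≤ -1 := by
    have := log_le_sub_one_of_pos (div_pos (sub_pos.mpr hK) hK0)
    rw [div_sub_one hK0.ne', le_div_iff₀ hK0] at this
    linarith
  rw [rpow_def_of_pos (div_pos (sub_pos.mpr hK) (mul_pos hK0 hu0)), ← exp_add, exp_le_exp,
    ← div_div, log_div (div_pos (sub_pos.mpr hK) hK0).ne' hu0.ne', gammaTailExponent]
  have hdiv : (K * (1 - u) - (K - 1)) * (1 - u)⁻¹ = K * (-u / (1 - u)) + u / (1 - u) + 1 := by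
    field_simp
    ring
  linarith

theorem gammaTailExponent_lt {K L ε : ℝ} (hε0 : 0 < ε) (hε : ε < 3 / 14) (hL : 1 / 2 ≤ L)
    (hK : 2 * L ≤ K * ε ^ 2 * (1 - 14 / 3 * ε)) : gammaTailExponent K ε < -L := by
  have hφ := neg_div_one_sub_sub_log_one_sub_le (u := ε) (by rw [abs_of_pos hε0]; linarith)
  rw [abs_of_pos hε0, add_sub_cancel_right] at hφ
  have hK0 : 0 ≤ K := by nlinarith [mul_pos (pow_pos hε0 2) (by linarith : 0 < 1 - 14 / 3 * ε)]
  have hdiv : ε / (1 - ε) ≤ 14 / 11 * ε := by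
    rw [div_le_iff₀ (by linarith)]; nlinarith
  calc gammaTailExponent K ε ≤ -K * ε ^ 2 / 2 + 14 / 11 * ε := by
        rw [gammaTailExponent]; nlinarith [mul_le_mul_of_nonneg_left hφ hK0]
    _ < -L := by nlinarith

theorem gammaTailExponent_neg_lt {K L ε : ℝ} (hε0 : 0 < ε) (hε : ε < 3 / 14) (hL : 0 ≤ L)
    (hK : 2 * L ≤ K * ε ^ 2 * (1 - 14 / 3 * ε)) : gammaTailExponent K (-ε) < -L := by
  have hφ := neg_div_one_sub_sub_log_one_sub_le (u := -ε)
    (by rw [abs_neg, abs_of_pos hε0]; linarith)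
  simp only [abs_neg, abs_of_pos hε0, neg_sq, Odd.neg_pow (by decide : Odd 3), neg_neg, neg_div,
    sub_neg_eq_add] at hφ
  have hK0 : 0 ≤ K := by nlinarith [mul_pos (pow_pos hε0 2) (by linarith : 0 < 1 - 14 / 3 * ε)]
  have h1 : ε ^ 3 / (1 - ε) ≤ 14 / 11 * ε ^ 3 := by
    rw [div_le_iff₀ (by linarith)]; nlinarith [pow_pos hε0 3]
  have h2 : ε ^ 3 / (1 + ε) ≤ ε ^ 3 := div_le_self (by positivity) (by linarith)
  have h3 : 0 < ε / (1 + ε) := by positivity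
  calc gammaTailExponent K (-ε) < K * (-ε ^ 2 / 2 + 25 / 11 * ε ^ 3) := by
        rw [gammaTailExponent]
        simp only [neg_neg, neg_div, sub_neg_eq_add]
        nlinarith [mul_le_mul_of_nonneg_left hφ hK0]
    _ ≤ -L := by nlinarith [pow_pos hε0 3]

theorem gammaMeasure_Ioi_inv_one_sub_le {K u : ℝ} (hK : 1 < K) (hu : u < 1) (hKu : 1 ≤ K * u) :
    gammaMeasure K (K - 1) (Set.Ioi (1 - u)⁻¹) ≤ ENNReal.ofReal (exp (gammaTailExponent K u)) :=
  (gammaMeasure_le_rpow_mul_exp (by linarith) (by linarith) (by nlinarith) measurableSet_Ioi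
    fun _ hx => mul_le_mul_of_nonpos_left (le_of_lt hx) (by nlinarith)).trans
    (ENNReal.ofReal_le_ofReal (rpow_mul_exp_le_exp_gammaTailExponent hK hu))

theorem gammaMeasure_Iio_inv_one_sub_le {K u : ℝ} (hK : 1 < K) (hu : u < 1) (hKu : K * u ≤ 1) :
    gammaMeasure K (K - 1) (Set.Iio (1 - u)⁻¹) ≤ ENNReal.ofReal (exp (gammaTailExponent K u)) :=
  (gammaMeasure_le_rpow_mul_exp (by linarith) (by linarith) (by nlinarith) measurableSet_Iio
    fun _ hx => mul_le_mul_of_nonneg_left (le_of_lt hx) (by nlinarith)).trans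
    (ENNReal.ofReal_le_ofReal (rpow_mul_exp_le_exp_gammaTailExponent hK hu))

theorem setOf_lt_abs_inv_sub_one_subset {ε : ℝ} (hε0 : 0 < ε) (hε1 : ε < 1) :
    {x : ℝ | ε < |x⁻¹ - 1|} ⊆ Set.Iio (1 + ε)⁻¹ ∪ Set.Ioi (1 - ε)⁻¹ := by
  intro x hx
  rcases le_or_gt x 0 with hx0 | hx0
  · exact Or.inl (hx0.trans_lt (by positivity))
  rcases lt_abs.mp (Set.mem_ofPred.mp hx) with h | h
  · exact Or.inl ((lt_inv_comm₀ hx0 (by linarith)).mpr (by linarith))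
  · exact Or.inr ((inv_lt_comm₀ (by linarith) hx0).mpr (by linarith))

theorem gammaMeasure_setOf_lt_abs_inv_sub_one_lt {K L ε : ℝ} (hε0 : 0 < ε) (hε : ε < 3 / 14)
    (hL : 1 / 2 ≤ L) (hK : 2 * L ≤ K * ε ^ 2 * (1 - 14 / 3 * ε)) :
    gammaMeasure K (K - 1) {x | ε < |x⁻¹ - 1|} < 2 * ENNReal.ofReal (exp (-L)) := by
  have hK0 : 0 ≤ K := by nlinarith [mul_pos (pow_pos hε0 2) (by linarith : 0 < 1 - 14 / 3 * ε)]
  have hKε : 1 ≤ K * ε := by nlinarith [mul_le_mul_of_nonneg_left hε.le (mul_nonneg hK0 hε0.le)]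
  have hK1 : 1 < K := by nlinarith
  have h_lo : gammaMeasure K (K - 1) (Set.Iio (1 + ε)⁻¹) < ENNReal.ofReal (exp (-L)) := by
    rw [← sub_neg_eq_add]
    exact (gammaMeasure_Iio_inv_one_sub_le hK1 (by linarith) (by nlinarith)).trans_lt
      (ENNReal.ofReal_lt_ofReal_iff'.mpr ⟨exp_lt_exp.mpr
        (gammaTailExponent_neg_lt hε0 hε (by linarith) hK), exp_pos _⟩)
  have h_up : gammaMeasure K (K - 1) (Set.Ioi (1 - ε)⁻¹) < ENNReal.ofReal (exp (-L)) :=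
    (gammaMeasure_Ioi_inv_one_sub_le hK1 (by linarith) hKε).trans_lt
      (ENNReal.ofReal_lt_ofReal_iff'.mpr ⟨exp_lt_exp.mpr
        (gammaTailExponent_lt hε0 hε hL hK), exp_pos _⟩)
  calc gammaMeasure K (K - 1) {x | ε < |x⁻¹ - 1|}
      ≤ gammaMeasure K (K - 1) (Set.Iio (1 + ε)⁻¹) + gammaMeasure K (K - 1) (Set.Ioi (1 - ε)⁻¹) :=
        (measure_mono (setOf_lt_abs_inv_sub_one_subset hε0 (by linarith))).trans
          (measure_union_le _ _)
    _ < ENNReal.ofReal (exp (-L)) + ENNReal.ofReal (exp (-L)) := ENNReal.add_lt_add h_lo h_up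
    _ = 2 * ENNReal.ofReal (exp (-L)) := (two_mul _).symm

/-- For `ε ∈ (0, 3/14)`, `δ ∈ (0,1)` and an integer
`k ≥ 2 ε⁻² (1 - (14/3)ε)⁻¹ ln(2/δ)`, if `X ~ Gamma(k, k-1)` then
`P(|1/X - 1| > ε) < δ`. -/
theorem gbas_accuracy (ε δ : ℝ) (hε : ε ∈ Set.Ioo (0 : ℝ) (3/14))
    (hδ : δ ∈ Set.Ioo (0 : ℝ) 1) (k : ℕ)
    (hk : 2 * ε⁻¹ ^ 2 * (1 - (14/3) * ε)⁻¹ * Real.log (2 / δ) ≤ (k : ℝ)) :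
    gammaMeasure k ((k : ℝ) - 1) {x | ε < |x⁻¹ - 1|} < ENNReal.ofReal δ := by
  obtain ⟨hε0, hε⟩ := hε
  obtain ⟨hδ0, hδ1⟩ := hδ
  have hL : 1 / 2 ≤ log (2 / δ) := by
    have : log 2 ≤ log (2 / δ) := log_le_log two_pos (by rw [le_div_iff₀ hδ0]; linarith)
    linarith [log_two_gt_d9]
  have hK : 2 * log (2 / δ) ≤ k * ε ^ 2 * (1 - 14 / 3 * ε) := by
    rw [mul_assoc, ← div_le_iff₀ (mul_pos (pow_pos hε0 2) (by linarith))]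
    refine le_of_eq_of_le ?_ hk
    rw [div_eq_mul_inv, mul_inv, inv_pow]
    ring
  have hexp : exp (-log (2 / δ)) = δ / 2 := by
    rw [exp_neg, exp_log (by positivity), inv_div]
  calc gammaMeasure k ((k : ℝ) - 1) {x | ε < |x⁻¹ - 1|}
      < 2 * ENNReal.ofReal (exp (-log (2 / δ))) :=
        gammaMeasure_setOf_lt_abs_inv_sub_one_lt hε0 hε hL hK
    _ = ENNReal.ofReal δ := by
        rw [hexp, ← ENNReal.ofReal_ofNat 2, ← ENNReal.ofReal_mul zero_le_two,
          mul_div_cancel₀ _ two_ne_zero]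
end

section
/- Let ε > 0, 0 < p_0 ≤ 1/2, and p_1 = p_0/(1+ε)^2. Define ω_0 = p_0 ln(p_1/p_0) + (1 - p_0) ln((1 - p_1)/(1 - p_0)). Then ω_0 ≥ -5 p_0 ε^2 / (1 + 2ε). -/
open Real

/-
Write `u = p₁/p₀ = (1+ε)⁻²` and `w = 1 - u`, so that `(1-p₁)/(1-p₀) = 1 + p₀w/(1-p₀)`.
The first term is `-2p₀ ln(1+ε) ≥ -2p₀ε`. For the second, `ln(1+x) ≥ x - x²/2` together with
`p₀ ≤ 1/2` gives `(1-p₀) ln(1 + p₀w/(1-p₀)) ≥ p₀(w - w²/2)`. What remains is the one-variable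
inequality `-2ε + w - w²/2 ≥ -5ε²/(1+2ε)`, whose difference is an explicit nonnegative rational
function of `ε`.
-/

lemma sub_sq_div_two_le_log_one_add {x : ℝ} (hx : 0 ≤ x) : x - x ^ 2 / 2 ≤ log (1 + x) := by
  refine le_trans ?_ (le_log_one_add_of_nonneg hx)
  rw [le_div_iff₀ (by linarith)]
  nlinarith [pow_nonneg hx 3]

lemma sub_sq_div_le_mul_log_one_add_div {a q : ℝ} (ha : 0 ≤ a) (hq : 0 < q) :
    a - a ^ 2 / (2 * q) ≤ q * log (1 + a / q) :=
  calc a - a ^ 2 / (2 * q) = q * (a / q - (a / q) ^ 2 / 2) := by field_simp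
    _ ≤ q * log (1 + a / q) :=
      mul_le_mul_of_nonneg_left (sub_sq_div_two_le_log_one_add (div_nonneg ha hq.le)) hq.le

lemma mul_sub_sq_div_two_le_one_sub_mul_log {p w : ℝ} (hp : 0 ≤ p) (hp' : p ≤ 1 / 2)
    (hw : 0 ≤ w) : p * (w - w ^ 2 / 2) ≤ (1 - p) * log (1 + p * w / (1 - p)) := by
  have hq : 0 < 1 - p := by linarith
  have hsq : (p * w) ^ 2 / (2 * (1 - p)) ≤ p * w ^ 2 / 2 := by
    rw [div_le_iff₀ (by positivity)]
    nlinarith [mul_nonneg (mul_nonneg hp (sq_nonneg w)) (by linarith : 0 ≤ 1 - 2 * p)]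
  calc p * (w - w ^ 2 / 2) ≤ p * w - (p * w) ^ 2 / (2 * (1 - p)) := by linarith
    _ ≤ (1 - p) * log (1 + p * w / (1 - p)) :=
      sub_sq_div_le_mul_log_one_add_div (mul_nonneg hp hw) hq

lemma neg_two_mul_le_log_inv_sq {ε : ℝ} (hε : -1 < ε) : -2 * ε ≤ log ((1 + ε) ^ 2)⁻¹ := by
  rw [log_inv, log_pow]
  have := log_le_sub_one_of_pos (by linarith : 0 < 1 + ε)
  push_cast
  linarith

lemma neg_five_mul_sq_div_le {ε : ℝ} (hε : 0 ≤ ε) :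
    -5 * ε ^ 2 / (1 + 2 * ε) ≤
      -2 * ε + ((1 - ((1 + ε) ^ 2)⁻¹) - (1 - ((1 + ε) ^ 2)⁻¹) ^ 2 / 2) := by
  have hgap : -2 * ε + ((1 - ((1 + ε) ^ 2)⁻¹) - (1 - ((1 + ε) ^ 2)⁻¹) ^ 2 / 2)
      - -5 * ε ^ 2 / (1 + 2 * ε)
      = ε ^ 4 * (5 + 6 * ε + 2 * ε ^ 2) / (2 * (1 + ε) ^ 4 * (1 + 2 * ε)) := by
    have : 1 + ε ≠ 0 := by linarith
    have : 1 + 2 * ε ≠ 0 := by linarith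
    field_simp
    ring
  have : 0 ≤ ε ^ 4 * (5 + 6 * ε + 2 * ε ^ 2) / (2 * (1 + ε) ^ 4 * (1 + 2 * ε)) := by positivity
  linarith

/-- For `ε > 0`, `0 < p₀ ≤ 1/2` and `p₁ = p₀/(1+ε)²`,
`ω₀ = p₀ ln(p₁/p₀) + (1-p₀) ln((1-p₁)/(1-p₀)) ≥ -5 p₀ ε²/(1+2ε)`. -/
theorem omega_lower_bound (ε p₀ p₁ : ℝ) (hε : 0 < ε) (hp0 : 0 < p₀)
    (hp0' : p₀ ≤ 1/2) (hp1 : p₁ = p₀ / (1 + ε)^2) :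
    -5 * p₀ * ε^2 / (1 + 2*ε)
      ≤ p₀ * Real.log (p₁ / p₀) + (1 - p₀) * Real.log ((1 - p₁) / (1 - p₀)) := by
  set u := ((1 + ε) ^ 2)⁻¹ with hu
  have hq : 1 - p₀ ≠ 0 := by linarith
  have hratio : p₁ / p₀ = u := by rw [hp1, hu]; field_simp
  have hratio_compl : (1 - p₁) / (1 - p₀) = 1 + p₀ * (1 - u) / (1 - p₀) := by
    rw [hp1, hu]; field_simp; ring
  have hw : 0 ≤ 1 - u := sub_nonneg.2 (inv_le_one_of_one_le₀ (by nlinarith))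
  calc -5 * p₀ * ε ^ 2 / (1 + 2 * ε) = p₀ * (-5 * ε ^ 2 / (1 + 2 * ε)) := by ring
    _ ≤ p₀ * (-2 * ε + ((1 - u) - (1 - u) ^ 2 / 2)) :=
      mul_le_mul_of_nonneg_left (neg_five_mul_sq_div_le hε.le) hp0.le
    _ = p₀ * (-2 * ε) + p₀ * ((1 - u) - (1 - u) ^ 2 / 2) := by ring
    _ ≤ p₀ * log (p₁ / p₀) + (1 - p₀) * log ((1 - p₁) / (1 - p₀)) := by
      rw [hratio, hratio_compl]
      gcongr ?_ + ?_
      · exact mul_le_mul_of_nonneg_left (neg_two_mul_le_log_inv_sq (by linarith)) hp0.le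
      · exact mul_sub_sq_div_two_le_one_sub_mul_log hp0.le hp0' hw
end

section
/- Let ε ∈ (0, 3/4). Then for γ'_1 = 1/(1-ε), we have γ'_1/exp(γ'_1 - 1) ≤ exp(-(1/2)ε^2 + (7/3)ε^3), and for γ'_2 = 1/((1-ε^2)(1+ε)), we have γ'_2/exp(γ'_2 - 1) ≤ exp(-(1/2)ε^2 + (7/3)ε^3). -/
/-!
Writing `γ = 1 / (1 - x)`, the claim `γ / exp (γ - 1) ≤ exp c` is `log γ ≤ γ - 1 + c`.
Comparing the series `-log (1 - x) = ∑ xⁿ/n` with the geometric series gives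
`log γ ≤ γ - 1 - x² / 2` for `x ∈ [0, 1)`, and truncating it gives
`log γ ≤ γ - 1 - (1 - γ)² / 2` for `γ ≤ 1`. The first bound settles `γ₁'` (take `x = ε`).
For `γ₂'` write `D = (1 - ε²)(1 + ε)`: if `D ≤ 1` then `ε + ε² ≥ 1`, so the target exponent
is nonnegative and the first bound suffices; otherwise `γ₂' < 1` and
`1 - γ₂' = ε (1 - ε - ε²) / D`, whose square is at least `ε² - (14/3) ε³`.
-/

open Real

namespace Real

theorem log_one_sub_le_neg_sub_sq_div_two {x : ℝ} (hx0 : 0 ≤ x) (hx1 : x < 1) :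
    log (1 - x) ≤ -x - x ^ 2 / 2 := by
  have hsum := hasSum_pow_div_log_of_abs_lt_one (abs_lt.2 ⟨by linarith, hx1⟩)
  have h := sum_le_hasSum (Finset.range 2) (fun n _ ↦ by positivity) hsum
  norm_num [Finset.sum_range_succ] at h
  linarith

theorem neg_log_one_sub_le_div_one_sub_sub_sq_div_two {x : ℝ} (hx0 : 0 ≤ x) (hx1 : x < 1) :
    -log (1 - x) ≤ x / (1 - x) - x ^ 2 / 2 := by
  have hgeom : HasSum (fun n : ℕ ↦ x ^ (n + 1)) (x / (1 - x)) := by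
    simpa only [pow_succ', div_eq_mul_inv] using (hasSum_geometric_of_lt_one hx0 hx1).mul_left x
  have hdiff := hgeom.sub (hasSum_pow_div_log_of_abs_lt_one (abs_lt.2 ⟨by linarith, hx1⟩))
  have h := le_hasSum hdiff 1 fun n _ ↦ by
    have : x ^ (n + 1) / (n + 1) ≤ x ^ (n + 1) := div_le_self (by positivity) (by linarith)
    linarith
  norm_num at h
  linarith

theorem log_le_sub_one_sub_sq_div_two {γ : ℝ} (hγ0 : 0 < γ) (hγ1 : γ ≤ 1) :
    log γ ≤ γ - 1 - (1 - γ) ^ 2 / 2 := by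
  simpa using log_one_sub_le_neg_sub_sq_div_two (sub_nonneg.2 hγ1) (by linarith)

theorem log_one_div_one_sub_le {x : ℝ} (hx0 : 0 ≤ x) (hx1 : x < 1) :
    log (1 / (1 - x)) ≤ 1 / (1 - x) - 1 - x ^ 2 / 2 := by
  have hx : 1 / (1 - x) - 1 = x / (1 - x) := by field_simp [(sub_pos.2 hx1).ne']; ring
  rw [one_div, log_inv, ← one_div, hx]
  exact neg_log_one_sub_le_div_one_sub_sub_sq_div_two hx0 hx1

theorem div_exp_sub_one_le_exp_of_log_le {γ c : ℝ} (hγ : 0 < γ) (h : log γ ≤ γ - 1 + c) :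
    γ / exp (γ - 1) ≤ exp c := by
  rw [div_le_iff₀ (exp_pos _), ← exp_add]
  exact (exp_log hγ).ge.trans (exp_le_exp.2 (by linarith))

end Real

theorem sq_mul_one_sub_le_sq_one_sub_one_div {ε : ℝ} (h0 : 0 ≤ ε) (h1 : ε < 1) :
    ε ^ 2 * (1 - 14 / 3 * ε) ≤ (1 - 1 / ((1 - ε ^ 2) * (1 + ε))) ^ 2 := by
  have hD : 0 < (1 - ε ^ 2) * (1 + ε) := by nlinarith
  have hpoly : (1 - 14 / 3 * ε) * ((1 - ε ^ 2) * (1 + ε)) ^ 2 ≤ (1 - ε - ε ^ 2) ^ 2 := by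
    rcases le_total (3 / 14) ε with h | h
    · nlinarith [sq_nonneg (1 - ε - ε ^ 2), sq_nonneg ((1 - ε ^ 2) * (1 + ε))]
    · nlinarith [mul_nonneg h0 h0, pow_nonneg h0 3, pow_nonneg h0 4, pow_nonneg h0 5,
        pow_nonneg h0 6, mul_nonneg h0 (sub_nonneg.2 h)]
  have hγ : (1 - 1 / ((1 - ε ^ 2) * (1 + ε))) * ((1 - ε ^ 2) * (1 + ε)) = ε * (1 - ε - ε ^ 2) := by
    rw [sub_mul, one_div_mul_cancel hD.ne']
    ring
  refine le_of_mul_le_mul_right ?_ (pow_pos hD 2)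
  calc ε ^ 2 * (1 - 14 / 3 * ε) * ((1 - ε ^ 2) * (1 + ε)) ^ 2
      ≤ ε ^ 2 * (1 - ε - ε ^ 2) ^ 2 := by
        rw [mul_assoc]; exact mul_le_mul_of_nonneg_left hpoly (sq_nonneg ε)
    _ = _ := by rw [← mul_pow, ← hγ, mul_pow]

/-- The two Chernoff-exponent bounds: for `ε ∈ (0, 3/4)`, with
`γ₁' = 1/(1-ε)` and `γ₂' = 1/((1-ε²)(1+ε))`, both `γ/exp(γ-1)` values are at
most `exp(-(1/2)ε² + (7/3)ε³)`. -/
theorem chernoff_exponent_bounds (ε : ℝ) (h0 : 0 < ε) (h1 : ε < 3/4) :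
    (1/(1-ε)) / Real.exp (1/(1-ε) - 1)
        ≤ Real.exp (-(1/2) * ε^2 + (7/3) * ε^3) ∧
    (1/((1-ε^2)*(1+ε))) / Real.exp (1/((1-ε^2)*(1+ε)) - 1)
        ≤ Real.exp (-(1/2) * ε^2 + (7/3) * ε^3) := by
  have hε1 : ε < 1 := by linarith
  refine ⟨div_exp_sub_one_le_exp_of_log_le (by simpa using hε1) ?_,
    div_exp_sub_one_le_exp_of_log_le (one_div_pos.2 (by nlinarith)) ?_⟩
  · nlinarith [log_one_div_one_sub_le h0.le hε1, pow_pos h0 3]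
  rcases le_total ((1 - ε ^ 2) * (1 + ε)) 1 with hD | hD
  · have hD' : 1 - (1 - (1 - ε ^ 2) * (1 + ε)) = (1 - ε ^ 2) * (1 + ε) := by ring
    have h := log_one_div_one_sub_le (sub_nonneg.2 hD) (by nlinarith)
    rw [hD'] at h
    nlinarith [sq_nonneg (1 - (1 - ε ^ 2) * (1 + ε)), mul_pos h0 h0]
  · have h := log_le_sub_one_sub_sq_div_two (one_div_pos.2 (by linarith))
      (div_le_one_of_le₀ hD (by linarith))
    nlinarith [sq_mul_one_sub_le_sq_one_sub_one_div h0.le hε1]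
end
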